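/- There exists a guarded monadic Datalog program P whose associated bag-query is not bounded: concretely, for the program with rules S(y) ← S(x), R(x,a,y), A(a) and Goal ← S(x), T(x), for every p ∈ ℕ there is a bag-instance J such that J satisfies the bag-query of P but the truncation of J to multiplicity p does not. -/
import Mathlib


/-- Facts over the signature of the Datalog program
`S(y) ← S(x), R(x,a,y), A(a)`; `Goal ← S(x), T(x)`, with domain `ℕ`. -/
inductive Fct : Type
  | S (a : ℕ) | T (a : ℕ) | A (a : ℕ) | R (a b c : ℕ)
deriving DecidableEq

/-- `SDeriv x m`: the intensional fact `S(x)` has a proof tree of the program whose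
multiset of extensional leaf facts is `m`. -/
inductive SDeriv : ℕ → Multiset Fct → Prop
  | base (x : ℕ) : SDeriv x {Fct.S x}
  | step (x a y : ℕ) (m : Multiset Fct) :
      SDeriv x m → SDeriv y (Fct.R x a y ::ₘ Fct.A a ::ₘ m)

/-- The bag-query associated to the program: a bag-instance `J` (a multiset of facts)
satisfies it iff the program has a proof tree of `Goal` whose multiset of leaf facts is
contained, as a multiset, in `J`. -/
def BagQ (J : Multiset Fct) : Prop :=
  ∃ (x : ℕ) (m : Multiset Fct), SDeriv x m ∧ Fct.T x ::ₘ m ≤ J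

/-- The truncation of a bag-instance to multiplicity `p`: cap every fact's count at `p`. -/
def trunc (p : ℕ) (J : Multiset Fct) : Multiset Fct :=
  J.toFinset.val.bind fun a => Multiset.replicate (min p (J.count a)) a

/-- chain multiset -/
def mch : ℕ → Multiset Fct
  | 0 => {Fct.S 0}
  | n+1 => Fct.R n 0 (n+1) ::ₘ Fct.A 0 ::ₘ mch n

lemma sderiv_mch (n : ℕ) : SDeriv n (mch n) := by
  induction n with
  | zero => exact SDeriv.base 0
  | succ n ih => exact SDeriv.step n 0 (n+1) _ ih

lemma mem_mch {b : Fct} {n : ℕ} (h : b ∈ mch n) :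
    b = Fct.S 0 ∨ b = Fct.A 0 ∨ ∃ i, b = Fct.R i 0 (i+1) := by
  induction n with
  | zero => simp [mch] at h; tauto
  | succ n ih =>
    simp [mch] at h
    rcases h with h | h | h
    · exact Or.inr (Or.inr ⟨n, h⟩)
    · tauto
    · exact ih h

lemma mem_trunc {b : Fct} {p : ℕ} {J : Multiset Fct} (h : b ∈ trunc p J) : b ∈ J := by
  simp only [trunc, Multiset.mem_bind] at h
  obtain ⟨a, ha, hb⟩ := h
  rw [Multiset.eq_of_mem_replicate hb]
  exact Multiset.mem_toFinset.mp ha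

lemma count_trunc_le (b : Fct) (p : ℕ) (J : Multiset Fct) :
    (trunc p J).count b ≤ p := by
  classical
  rw [trunc, Multiset.count_bind]
  rcases em (b ∈ J.toFinset) with hb | hb
  · calc ((J.toFinset.val.map fun a => (Multiset.replicate (min p (J.count a)) a).count b)).sum
        = ∑ a ∈ J.toFinset, (Multiset.replicate (min p (J.count a)) a).count b := rfl
      _ = (Multiset.replicate (min p (J.count b)) b).count b := by
          apply Finset.sum_eq_single_of_mem _ hb
          intro a _ hab
          simp [Multiset.count_replicate, hab]
      _ ≤ p := by simp [Multiset.count_replicate]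
  · have : ∀ a ∈ J.toFinset, (Multiset.replicate (min p (J.count a)) a).count b = 0 := by
      intro a ha
      rcases em (a = b) with rfl | h
      · exact absurd ha hb
      · simp [Multiset.count_replicate, h]
    calc ((J.toFinset.val.map fun a => (Multiset.replicate (min p (J.count a)) a).count b)).sum
        = ∑ a ∈ J.toFinset, (Multiset.replicate (min p (J.count a)) a).count b := rfl
      _ = 0 := Finset.sum_eq_zero this
      _ ≤ p := Nat.zero_le _

lemma key {J' : Multiset Fct}
    (hS : ∀ x, Fct.S x ∈ J' → x = 0)
    (hR : ∀ x a y, Fct.R x a y ∈ J' → a = 0 ∧ y = x + 1) :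
    ∀ {x m}, SDeriv x m → m ≤ J' → x ≤ m.count (Fct.A 0) := by
  intro x m h
  induction h with
  | base x =>
    intro hle
    have : Fct.S x ∈ J' := Multiset.mem_of_le hle (by simp)
    simp [hS x this]
  | step x a y m hd ih =>
    intro hle
    have hm : m ≤ J' := le_trans (le_trans (Multiset.le_cons_self _ _)
      (Multiset.le_cons_self _ _)) hle
    have hRm : Fct.R x a y ∈ J' := Multiset.mem_of_le hle (by simp)
    obtain ⟨rfl, rfl⟩ := hR x a y hRm
    have := ih hm
    simp [Multiset.count_cons]
    omega

/-- The bag-query of the guarded monadic Datalog program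
`S(y) ← S(x), R(x,a,y), A(a)`; `Goal ← S(x), T(x)` is not bounded: for every `p ∈ ℕ`
there is a bag-instance `J` satisfying the bag-query whose truncation to
multiplicity `p` does not. -/
theorem datalog_bag_query_not_bounded :
    ∀ p : ℕ, ∃ J : Multiset Fct, BagQ J ∧ ¬ BagQ (trunc p J) := by
  intro p
  set n := p + 1 with hn
  refine ⟨Fct.T n ::ₘ mch n, ⟨n, mch n, sderiv_mch n, le_refl _⟩, ?_⟩
  rintro ⟨x, m, hd, hle⟩
  set J : Multiset Fct := Fct.T n ::ₘ mch n with hJ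
  have hmemJ : ∀ b ∈ trunc p J, b ∈ J := fun b hb => mem_trunc hb
  have hS : ∀ y, Fct.S y ∈ trunc p J → y = 0 := by
    intro y hy
    have := hmemJ _ hy
    rw [hJ, Multiset.mem_cons] at this
    rcases this with h | h
    · exact absurd h (by simp)
    · rcases mem_mch h with h | h | ⟨i, h⟩ <;> simp_all
  have hR : ∀ u a v, Fct.R u a v ∈ trunc p J → a = 0 ∧ v = u + 1 := by
    intro u a v hv
    have := hmemJ _ hv
    rw [hJ, Multiset.mem_cons] at this
    rcases this with h | h
    · exact absurd h (by simp)
    · rcases mem_mch h with h | h | ⟨i, h⟩ <;> simp_all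
  have hxn : x = n := by
    have : Fct.T x ∈ trunc p J := Multiset.mem_of_le hle (by simp)
    have := hmemJ _ this
    rw [hJ, Multiset.mem_cons] at this
    rcases this with h | h
    · simpa using h
    · rcases mem_mch h with h | h | ⟨i, h⟩ <;> simp_all
  have hm : m ≤ trunc p J := le_trans (Multiset.le_cons_self _ _) hle
  have h1 : x ≤ m.count (Fct.A 0) := key hS hR hd hm
  have h2 : m.count (Fct.A 0) ≤ (trunc p J).count (Fct.A 0) :=
    Multiset.count_le_of_le _ hm
  have h3 := count_trunc_le (Fct.A 0) p J
  omega
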